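/- arXiv:1806.00940 — 3 statements merged into one kernel-verified Lean document; each statement's English description precedes it below -/
import Mathlib

section
/- For every triple (a1,a2,a3) of positive integers satisfying a1 | a2+1, a2 | a1*a3+1, and a3 | a2+1, all six quantities (a2+1)/a1, (a1*a3+1)/a2, (a2+1)/a3, (a1*a3+1+a2)/(a1*a2), (a1*a3+1+a2)/(a2*a3), and (a2^2+2*a2+1+a1*a3)/(a1*a2*a3) are positive integers. -/
/-- For every triple of positive integers satisfying the three divisibility
conditions at the acyclic seed of type `A₃`, all six non-initial cluster
variable specializations are positive integers (i.e. the corresponding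
divisibilities hold; the quotients are then automatically positive). -/
theorem frieze_A3_all_integral (a1 a2 a3 : ℕ)
    (h1 : 0 < a1) (h2 : 0 < a2) (h3 : 0 < a3)
    (d1 : a1 ∣ a2 + 1) (d2 : a2 ∣ a1 * a3 + 1) (d3 : a3 ∣ a2 + 1) :
    (a1 ∣ a2 + 1 ∧ 0 < (a2 + 1) / a1) ∧
    (a2 ∣ a1 * a3 + 1 ∧ 0 < (a1 * a3 + 1) / a2) ∧
    (a3 ∣ a2 + 1 ∧ 0 < (a2 + 1) / a3) ∧
    (a1 * a2 ∣ a1 * a3 + 1 + a2 ∧ 0 < (a1 * a3 + 1 + a2) / (a1 * a2)) ∧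
    (a2 * a3 ∣ a1 * a3 + 1 + a2 ∧ 0 < (a1 * a3 + 1 + a2) / (a2 * a3)) ∧
    (a1 * a2 * a3 ∣ a2 ^ 2 + 2 * a2 + 1 + a1 * a3 ∧
      0 < (a2 ^ 2 + 2 * a2 + 1 + a1 * a3) / (a1 * a2 * a3)) := by
  -- coprimality facts
  have c12 : Nat.Coprime a1 a2 := by
    have h : Nat.gcd a1 a2 ∣ (a2 + 1) - a2 :=
      Nat.dvd_sub (dvd_trans (Nat.gcd_dvd_left _ _) d1) (Nat.gcd_dvd_right _ _)
    simpa using h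
  have c23 : Nat.Coprime a2 a3 := by
    have h : Nat.gcd a2 a3 ∣ (a2 + 1) - a2 :=
      Nat.dvd_sub (dvd_trans (Nat.gcd_dvd_right _ _) d3) (Nat.gcd_dvd_left _ _)
    simpa using h
  have c2 : Nat.Coprime a2 (a1 * a3) := by
    have h : Nat.gcd a2 (a1 * a3) ∣ (a1 * a3 + 1) - a1 * a3 :=
      Nat.dvd_sub (dvd_trans (Nat.gcd_dvd_left _ _) d2) (Nat.gcd_dvd_right _ _)
    simpa using h
  have D4 : a1 * a2 ∣ a1 * a3 + 1 + a2 := by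
    apply Nat.Coprime.mul_dvd_of_dvd_of_dvd c12
    · have : a1 ∣ a1 * a3 + (a2 + 1) := dvd_add (Dvd.intro a3 rfl) d1
      have e : a1 * a3 + (a2 + 1) = a1 * a3 + 1 + a2 := by ring
      rwa [e] at this
    · exact dvd_add d2 dvd_rfl
  have D5 : a2 * a3 ∣ a1 * a3 + 1 + a2 := by
    apply Nat.Coprime.mul_dvd_of_dvd_of_dvd c23
    · exact dvd_add d2 dvd_rfl
    · have : a3 ∣ a1 * a3 + (a2 + 1) := dvd_add (Dvd.intro_left a1 rfl) d3
      have e : a1 * a3 + (a2 + 1) = a1 * a3 + 1 + a2 := by ring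
      rwa [e] at this
  have D6 : a1 * a2 * a3 ∣ a2 ^ 2 + 2 * a2 + 1 + a1 * a3 := by
    have hN : a2 ^ 2 + 2 * a2 + 1 + a1 * a3 = (a2 + 1) * (a2 + 1) + a1 * a3 := by ring
    have h13 : a1 * a3 ∣ a2 ^ 2 + 2 * a2 + 1 + a1 * a3 := by
      rw [hN]; exact dvd_add (mul_dvd_mul d1 d3) dvd_rfl
    have hA2 : a2 ∣ a2 ^ 2 + 2 * a2 + 1 + a1 * a3 := by
      have : a2 ∣ a2 ^ 2 + 2 * a2 + (a1 * a3 + 1) :=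
        dvd_add (dvd_add (dvd_pow_self a2 two_ne_zero) (Dvd.intro_left 2 rfl)) d2
      have e : a2 ^ 2 + 2 * a2 + (a1 * a3 + 1) = a2 ^ 2 + 2 * a2 + 1 + a1 * a3 := by ring
      rwa [e] at this
    have := Nat.Coprime.mul_dvd_of_dvd_of_dvd c2 hA2 h13
    have e : a2 * (a1 * a3) = a1 * a2 * a3 := by ring
    rwa [e] at this
  have pos : ∀ n d : ℕ, 0 < d → 0 < n → d ∣ n → 0 < n / d := fun n d hd hn h =>
    Nat.div_pos (Nat.le_of_dvd hn h) hd
  refine ⟨⟨d1, pos _ _ h1 (by omega) d1⟩, ⟨d2, pos _ _ h2 (by positivity) d2⟩,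
    ⟨d3, pos _ _ h3 (by omega) d3⟩,
    ⟨D4, pos _ _ (by positivity) (by positivity) D4⟩,
    ⟨D5, pos _ _ (by positivity) (by positivity) D5⟩,
    ⟨D6, pos _ _ (by positivity) (by positivity) D6⟩⟩
end

section
/- In the Gaussian integers Z[i], the sequence defined by u_1 = 1, u_2 = 1+i, u_{n+1} = (u_n + 1)/u_{n-1} is well-defined (each division is exact in Z[i]), 5-periodic with values 1, 1+i, 2+i, 2-i, 1-i, and no two cyclically adjacent values in the 5-cycle (1, 1+i, 2+i, 2-i, 1-i) are both units in Z[i]. -/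
open Zsqrtd

/-- The 5-cycle `1, 1+i, 2+i, 2-i, 1-i` in the Gaussian integers, indexed
cyclically. -/
def gaussA2Cycle : ZMod 5 → GaussianInt :=
  fun j => if j = 0 then ⟨1, 0⟩ else if j = 1 then ⟨1, 1⟩ else if j = 2 then ⟨2, 1⟩
    else if j = 3 then ⟨2, -1⟩ else ⟨1, -1⟩

/-- The sequence `u 1 = 1`, `u 2 = 1+i`, `u (n+1) = (u n + 1)/u (n-1)` in
`ℤ[i]` is well defined (every division is exact, expressed by the product form
of the diamond relation), 5-periodic with values `1, 1+i, 2+i, 2-i, 1-i`, and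
no two cyclically adjacent values of the 5-cycle are both units of `ℤ[i]`;
hence this frieze of type `A₂` over `ℤ[i]` is not unitary. -/
theorem gaussian_A2_frieze_not_unitary :
    (∀ j : ZMod 5,
        gaussA2Cycle (j - 1) * gaussA2Cycle (j + 1) = gaussA2Cycle j + 1) ∧
    (∀ j : ZMod 5, ¬ (IsUnit (gaussA2Cycle j) ∧ IsUnit (gaussA2Cycle (j + 1)))) := by
  have key : ∀ x : GaussianInt, IsUnit x → x.norm.natAbs = 1 :=
    fun _ h => Zsqrtd.norm_eq_one_iff.mpr h
  constructor
  · intro j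
    fin_cases j <;> decide
  · intro j
    rintro ⟨ha, hb⟩
    have h1 := key _ ha
    have h2 := key _ hb
    fin_cases j <;> revert h1 h2 <;> decide
end

section
/- Let R be an integral domain and let a1, a2 be units of R. Then the type A2 frieze recursion u_1 = a1, u_2 = a2, u_{n+1} = (u_n + 1)/u_{n-1} produces values that all lie in R (each division is exact), i.e., specializing a cluster to units yields a frieze with values in R. -/
private def friezeA2 {R : Type*} [CommRing R] (v1 v2 : Rˣ) (n : ℕ) : R :=
  match n % 5 with
  | 1 => v1
  | 2 => v2
  | 3 => ((v2 : R) + 1) * ↑v1⁻¹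
  | 4 => ((v1 : R) + (v2 : R) + 1) * (↑v1⁻¹ * ↑v2⁻¹)
  | _ => ((v1 : R) + 1) * ↑v2⁻¹

private lemma friezeA2_mod {R : Type*} [CommRing R] (v1 v2 : Rˣ) (n : ℕ) :
    friezeA2 v1 v2 n = friezeA2 v1 v2 (n % 5) := by
  unfold friezeA2
  rw [Nat.mod_mod_of_dvd n (dvd_refl 5)]

/-- Specializing a cluster of type `A₂` to units of an integral domain `R`
yields a frieze with all values in `R`: there is a sequence in `R` starting
with the two units and satisfying the exact-division form
`u (n+1) * u (n-1) = u n + 1` of the recursion `u (n+1) = (u n + 1)/u (n-1)`. -/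
theorem frieze_A2_units_integral (R : Type*) [CommRing R] [IsDomain R]
    (a1 a2 : R) (h1 : IsUnit a1) (h2 : IsUnit a2) :
    ∃ u : ℕ → R, u 1 = a1 ∧ u 2 = a2 ∧
      ∀ n, 2 ≤ n → u (n + 1) * u (n - 1) = u n + 1 := by
  obtain ⟨v1, rfl⟩ := h1
  obtain ⟨v2, rfl⟩ := h2
  refine ⟨friezeA2 v1 v2, rfl, rfl, ?_⟩
  intro n hn
  have e1 : (n + 1) % 5 = (n % 5 + 1) % 5 := by omega
  have e2 : (n - 1) % 5 = (n % 5 + 4) % 5 := by omega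
  rw [friezeA2_mod v1 v2 (n+1), friezeA2_mod v1 v2 (n-1), friezeA2_mod v1 v2 n, e1, e2]
  have hk : n % 5 < 5 := Nat.mod_lt _ (by norm_num)
  have hinv1 : (↑v1⁻¹ : R) * ↑v1 = 1 := by rw [← Units.val_mul]; simp
  have hinv2 : (↑v2⁻¹ : R) * ↑v2 = 1 := by rw [← Units.val_mul]; simp
  interval_cases h : n % 5 <;> simp only [friezeA2]
  · linear_combination ((v1:R) + (v2:R) + 1) * ↑v2⁻¹ * hinv1 + hinv2
  · linear_combination ((v1:R) + 1) * hinv2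
  · linear_combination ((v2:R) + 1) * hinv1
  · linear_combination hinv1 + ((v1:R) + (v2:R) + 1) * ↑v1⁻¹ * hinv2
  · linear_combination (↑v2⁻¹ * (v2:R)) * hinv1 + hinv2
end
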